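/- (Lemma 4(b).) In the Bernoulli-design group testing model with n items, defective set K of size k (1 ≤ k < n), m tests, and i.i.d. Bernoulli(p) test-matrix entries with p ∈ (0,1), let G be the number of hidden non-defective items (items j ∉ K such that every test i with A_{ij} = 1 has some j' ∈ K with A_{ij'} = 1). Then E[G] = (n−k) · (1 − p(1−p)^k)^m. -/
import Mathlib


open MeasureTheory
open scoped ENNReal

/-- The Bernoulli(p) measure on `Bool`: `P(true) = p`, `P(false) = 1 - p`. -/
noncomputable def bern (p : ℝ) : Measure Bool :=
  ENNReal.ofReal p • Measure.dirac true + ENNReal.ofReal (1 - p) • Measure.dirac false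

instance (p : ℝ) : IsFiniteMeasure (bern p) := by
  constructor
  simp [bern, Measure.add_apply, Measure.smul_apply]

/-- The number of hidden non-defective items: items `j ∉ K` such that every test in which
`j` participates contains some defective item. -/
def hiddenCount {n m : ℕ} (K : Finset (Fin n)) (A : Fin m → Fin n → Bool) : ℕ :=
  ((Finset.univ \ K).filter
    (fun j => ∀ i, A i j = true → ∃ j' ∈ K, A i j' = true)).card


lemma bern_true (p : ℝ) : bern p {true} = ENNReal.ofReal p := by
  simp [bern, Measure.dirac_apply]

lemma bern_false (p : ℝ) : bern p {false} = ENNReal.ofReal (1 - p) := by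
  simp [bern, Measure.dirac_apply]

lemma bern_prob (p : ℝ) (hp : p ∈ Set.Ioo (0 : ℝ) 1) : IsProbabilityMeasure (bern p) := by
  constructor
  rw [show (Set.univ : Set Bool) = {true} ∪ {false} by ext b; cases b <;> simp]
  rw [measure_union (by simp) (Set.countable_singleton _).measurableSet, bern_true, bern_false,
    ← ENNReal.ofReal_add hp.1.le (by linarith [hp.2])]
  norm_num

/-- Lemma 4(b): the expected number of hidden non-defectives is
`E[G] = (n-k)(1 - p(1-p)^k)^m`. -/
theorem stmt16 (n m k : ℕ) (p : ℝ) (hp : p ∈ Set.Ioo (0 : ℝ) 1)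
    (K : Finset (Fin n)) (hK : K.card = k) (hk1 : 1 ≤ k) (hkn : k < n) :
    ∫⁻ A, (hiddenCount K A : ℝ≥0∞)
        ∂(Measure.pi fun _ : Fin m => Measure.pi fun _ : Fin n => bern p)
      = ENNReal.ofReal (((n : ℝ) - (k : ℝ)) * (1 - p * (1 - p) ^ k) ^ m) := by
  classical
  obtain ⟨hp0, hp1⟩ := hp
  have hbp : IsProbabilityMeasure (bern p) := bern_prob p ⟨hp0, hp1⟩
  set μrow : Measure (Fin n → Bool) := Measure.pi fun _ : Fin n => bern p with hμrow
  have hrowprob : IsProbabilityMeasure μrow := by infer_instance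
  have hkn' : k ≤ n := hkn.le
  -- the per-row "bad" set for item j
  have key : ∀ j : Fin n, j ∉ K →
      μrow {r : Fin n → Bool | r j = true → ∃ j' ∈ K, r j' = true}
        = ENNReal.ofReal (1 - p * (1 - p) ^ k) := by
    intro j hj
    set T : Set (Fin n → Bool) :=
      Set.univ.pi (fun l => if l = j then ({true} : Set Bool)
        else if l ∈ K then ({false} : Set Bool) else Set.univ) with hT
    have hTeq : {r : Fin n → Bool | r j = true → ∃ j' ∈ K, r j' = true} = Tᶜ := by
      ext r
      simp only [Set.mem_setOf_eq, Set.mem_compl_iff, hT, Set.mem_pi, Set.mem_univ,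
        forall_true_left, not_forall]
      constructor
      · intro h
        by_cases hrj : r j = true
        · obtain ⟨j', hj', hrj'⟩ := h hrj
          refine ⟨j', ?_⟩
          have : j' ≠ j := fun e => hj (e ▸ hj')
          simp [this, hj', hrj']
        · exact ⟨j, by simp [hrj]⟩
      · rintro ⟨l, hl⟩ hrj
        by_cases hlj : l = j
        · subst hlj; simp [hrj] at hl
        · by_cases hlK : l ∈ K
          · simp only [hlj, if_false, hlK, if_true, Set.mem_singleton_iff] at hl
            exact ⟨l, hlK, by revert hl; cases r l <;> simp⟩
          · simp [hlj, hlK] at hl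
    have hTval : μrow T = ENNReal.ofReal (p * (1 - p) ^ k) := by
      rw [hT, hμrow, Measure.pi_pi]
      have : ∀ l : Fin n,
          bern p (if l = j then ({true} : Set Bool)
            else if l ∈ K then ({false} : Set Bool) else Set.univ)
            = if l = j then ENNReal.ofReal p
              else if l ∈ K then ENNReal.ofReal (1 - p) else 1 := by
        intro l
        by_cases h1 : l = j
        · simp [h1, bern_true]
        · by_cases h2 : l ∈ K
          · simp [h1, h2, bern_false]
          · simp only [h1, if_false, h2]
            exact measure_univ
      simp only [this]
      rw [← Finset.prod_subset (Finset.subset_univ (insert j K))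
        (by intro x _ hx
            simp only [Finset.mem_insert, not_or] at hx
            simp [hx.1, hx.2]),
        Finset.prod_insert hj]
      have : ∀ l ∈ K, (if l = j then ENNReal.ofReal p
          else if l ∈ K then ENNReal.ofReal (1 - p) else 1) = ENNReal.ofReal (1 - p) := by
        intro l hl
        have : l ≠ j := fun e => hj (e ▸ hl)
        simp [this, hl]
      rw [Finset.prod_congr rfl this, Finset.prod_const, hK, if_pos rfl,
        ← ENNReal.ofReal_pow (by linarith), ← ENNReal.ofReal_mul hp0.le]
    have hq : (0:ℝ) ≤ 1 - p := by linarith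
    have hx0 : 0 ≤ p * (1 - p) ^ k := by positivity
    have hx1 : p * (1 - p) ^ k ≤ 1 := by
      have h1 : (1 - p) ^ k ≤ 1 := pow_le_one₀ (by linarith) (by linarith)
      nlinarith
    rw [hTeq, measure_compl (Set.to_countable T).measurableSet (measure_ne_top _ _),
      measure_univ, hTval, ← ENNReal.ofReal_one, ← ENNReal.ofReal_sub _ hx0]
  -- rewrite hiddenCount as a sum of indicators
  have hsum : ∀ A : Fin m → Fin n → Bool,
      (hiddenCount K A : ℝ≥0∞) = ∑ j ∈ Finset.univ \ K,
        Set.indicator {A' : Fin m → Fin n → Bool |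
          ∀ i, A' i j = true → ∃ j' ∈ K, A' i j' = true} 1 A := by
    intro A
    rw [hiddenCount, Finset.card_filter]
    push_cast
    refine Finset.sum_congr rfl fun j _ => ?_
    by_cases h : ∀ i, A i j = true → ∃ j' ∈ K, A i j' = true <;>
      simp [h, Set.indicator_apply]
  simp only [hsum]
  rw [lintegral_finset_sum _ (fun j _ => (Measurable.of_discrete (f := fun A => Set.indicator _ 1 A)))]
  have hconst : ∀ j ∈ Finset.univ \ K,
      ∫⁻ A, Set.indicator {A' : Fin m → Fin n → Bool |
          ∀ i, A' i j = true → ∃ j' ∈ K, A' i j' = true} 1 A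
        ∂(Measure.pi fun _ : Fin m => μrow)
      = ENNReal.ofReal ((1 - p * (1 - p) ^ k) ^ m) := by
    intro j hj
    rw [Finset.mem_sdiff] at hj
    rw [lintegral_indicator_one (Set.to_countable _).measurableSet]
    have : {A' : Fin m → Fin n → Bool | ∀ i, A' i j = true → ∃ j' ∈ K, A' i j' = true}
        = Set.univ.pi (fun _ : Fin m =>
            {r : Fin n → Bool | r j = true → ∃ j' ∈ K, r j' = true}) := by
      ext A'; simp [Set.mem_pi]
    rw [this, Measure.pi_pi]
    simp only [key j hj.2]
    rw [Finset.prod_const, Finset.card_univ, Fintype.card_fin]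
    have hq : (0:ℝ) ≤ 1 - p := by linarith
    have hx0 : 0 ≤ p * (1 - p) ^ k := by positivity
    have hx1 : p * (1 - p) ^ k ≤ 1 := by
      have h1 : (1 - p) ^ k ≤ 1 := pow_le_one₀ (by linarith) (by linarith)
      nlinarith
    rw [← ENNReal.ofReal_pow (by linarith)]
  rw [Finset.sum_congr rfl hconst, Finset.sum_const, Finset.card_sdiff_of_subset (Finset.subset_univ K),
    Finset.card_univ, Fintype.card_fin, hK, nsmul_eq_mul]
  have hcast : ((n - k : ℕ) : ℝ≥0∞) = ENNReal.ofReal ((n : ℝ) - (k : ℝ)) := by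
    rw [← ENNReal.ofReal_natCast]
    congr 1
    push_cast [Nat.cast_sub hkn']
    ring
  rw [hcast, ← ENNReal.ofReal_mul (by
    have := (Nat.cast_le (α := ℝ)).mpr hkn'; linarith)]
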